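/- Pruning soundness (Property 1): Let δ be a finite database of C-sequences, k ∈ ℕ, and ξ ∈ ℝ. If an L-sequence L is unpromising, i.e. LWU_k(L) < ξ, then every L-sequence L' with L a sub-L-sequence of L' and |L'| ≤ k satisfies u_max(L') < ξ; that is, every such super-L-sequence of L is of low utility. -/

import Mathlib

open scoped Classical

variable {α : Type*}

/-- C-eventset containment: `(c, λ) ⊑ (c', λ')` iff `c ⊆ c'` and `λ = λ'`. -/
def EsetSub (σ τ : Finset α × ℕ) : Prop := σ.1 ⊆ τ.1 ∧ σ.2 = τ.2

/-- C-sequence containment: `C ⊑ C'` iff there are strictly increasing indices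
`j_1 < … < j_n` into `C'` with `σ_k ⊑ σ'_{j_k}` for all `k`. -/
def CSub (C C' : List (Finset α × ℕ)) : Prop :=
  ∃ D : List (Finset α × ℕ), D.Sublist C' ∧ List.Forall₂ EsetSub C D

/-- `C ∼ L` : the C-sequence `C` matches the L-sequence `L`. -/
def Matches (C : List (Finset α × ℕ)) (L : List (Finset α)) : Prop :=
  C.map Prod.fst = L

/-- `L` is a sub-L-sequence of `L'`. -/
def LSub (L L' : List (Finset α)) : Prop :=
  ∃ M : List (Finset α), M.Sublist L' ∧ List.Forall₂ (fun a b => a ⊆ b) L M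

/-- Utility of a C-eventset: `u_e (c, λ) = λ · Σ_{l ∈ c} p l`. -/
noncomputable def ue (p : α → ℝ) (σ : Finset α × ℕ) : ℝ := (σ.2 : ℝ) * ∑ l ∈ σ.1, p l

/-- Utility of a C-sequence: sum of the utilities of its C-eventsets. -/
noncomputable def us (p : α → ℝ) (C : List (Finset α × ℕ)) : ℝ := (C.map (ue p)).sum

/-- `u_maxk (C, k)`: the maximum utility of at most `k` C-eventsets in `C`. -/
noncomputable def umaxk (p : α → ℝ) (C : List (Finset α × ℕ)) (k : ℕ) : ℝ :=
  sSup { x : ℝ | ∃ C'', CSub C'' C ∧ C''.length ≤ k ∧ x = us p C'' }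

/-- `LWU_k(L)`: the L-sequence-weighted utilization of `L` w.r.t. maximum length `k`. -/
noncomputable def LWU (p : α → ℝ) (δ : Finset (List (Finset α × ℕ))) (k : ℕ)
    (L : List (Finset α)) : ℝ :=
  ∑ C ∈ δ, if ∃ C', CSub C' C ∧ Matches C' L then umaxk p C k else 0

/-- `u_max(L)`: the maximum utility of the L-sequence `L` in the database `δ`. -/
noncomputable def umax (p : α → ℝ) (δ : Finset (List (Finset α × ℕ)))
    (L : List (Finset α)) : ℝ :=
  ∑ C ∈ δ, sSup ({ x : ℝ | ∃ C', CSub C' C ∧ Matches C' L ∧ x = us p C' } ∪ {0})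

/-!
A match of `L'` in a C-sequence `C` with `|L'| ≤ k` is a C-sequence contained in `C` with at most
`k` C-eventsets, so its utility is at most `u_maxk(C, k)`. Shrinking its coincidences to those of
`L` yields a match of `L` in `C`, so `C` contributes `u_maxk(C, k)` to `LWU_k(L)`. Comparing the
two sums term by term gives `u_max(L') ≤ LWU_k(L)`. Nonnegativity of `p` makes utility monotone
under containment, so the sets whose suprema define `u_maxk` are bounded by `u_s(C)`; without a
bound, `sSup` on `ℝ` would be the junk value `0`.
-/

theorem EsetSub.trans {σ τ υ : Finset α × ℕ} (h₁ : EsetSub σ τ) (h₂ : EsetSub τ υ) :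
    EsetSub σ υ :=
  ⟨h₁.1.trans h₂.1, h₁.2.trans h₂.2⟩

instance : IsTrans (Finset α × ℕ) EsetSub := ⟨fun _ _ _ => EsetSub.trans⟩

theorem cSub_iff_sublistForall₂ {C C' : List (Finset α × ℕ)} :
    CSub C C' ↔ List.SublistForall₂ EsetSub C C' := by
  rw [List.sublistForall₂_iff]
  exact ⟨fun ⟨D, hD, hF⟩ => ⟨D, hF, hD⟩, fun ⟨D, hF, hD⟩ => ⟨D, hD, hF⟩⟩

theorem CSub.trans {A B C : List (Finset α × ℕ)} (h₁ : CSub A B) (h₂ : CSub B C) : CSub A C :=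
  cSub_iff_sublistForall₂.2 <|
    Trans.trans (cSub_iff_sublistForall₂.1 h₁) (cSub_iff_sublistForall₂.1 h₂)

theorem CSub.nil (C : List (Finset α × ℕ)) : CSub [] C :=
  ⟨[], List.nil_sublist C, List.Forall₂.nil⟩

section Utility

variable {p : α → ℝ} (hp : ∀ l, 0 ≤ p l)
include hp

theorem ue_nonneg (σ : Finset α × ℕ) : 0 ≤ ue p σ :=
  mul_nonneg (Nat.cast_nonneg _) (Finset.sum_nonneg fun l _ => hp l)

theorem ue_le_ue {σ τ : Finset α × ℕ} (h : EsetSub σ τ) : ue p σ ≤ ue p τ := by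
  rw [ue, ue, h.2]
  exact mul_le_mul_of_nonneg_left
    (Finset.sum_le_sum_of_subset_of_nonneg h.1 fun l _ _ => hp l) (Nat.cast_nonneg _)

theorem us_le_us_of_forall₂ {A B : List (Finset α × ℕ)} (h : List.Forall₂ EsetSub A B) :
    us p A ≤ us p B := by
  induction h with
  | nil => exact le_rfl
  | cons hab _ ih =>
    simp only [us, List.map_cons, List.sum_cons] at ih ⊢
    exact add_le_add (ue_le_ue hp hab) ih

theorem us_le_us_of_sublist {A B : List (Finset α × ℕ)} (h : A.Sublist B) :
    us p A ≤ us p B :=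
  (h.map (ue p)).sum_le_sum fun x hx => by
    obtain ⟨σ, -, rfl⟩ := List.mem_map.1 hx
    exact ue_nonneg hp σ

theorem us_le_us {A B : List (Finset α × ℕ)} (h : CSub A B) : us p A ≤ us p B := by
  obtain ⟨D, hD, hF⟩ := h
  exact (us_le_us_of_forall₂ hp hF).trans (us_le_us_of_sublist hp hD)

theorem bddAbove_umaxk_set (C : List (Finset α × ℕ)) (k : ℕ) :
    BddAbove {x : ℝ | ∃ C'', CSub C'' C ∧ C''.length ≤ k ∧ x = us p C''} :=
  ⟨us p C, by rintro x ⟨C'', hC'', -, rfl⟩; exact us_le_us hp hC''⟩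

theorem us_le_umaxk {C C'' : List (Finset α × ℕ)} {k : ℕ} (hsub : CSub C'' C)
    (hlen : C''.length ≤ k) : us p C'' ≤ umaxk p C k :=
  le_csSup (bddAbove_umaxk_set hp C k) ⟨C'', hsub, hlen, rfl⟩

theorem umaxk_nonneg (C : List (Finset α × ℕ)) (k : ℕ) : 0 ≤ umaxk p C k := by
  simpa [us] using us_le_umaxk hp (CSub.nil C) (Nat.zero_le k)

end Utility

theorem exists_forall₂_esetSub_matches :
    ∀ {L : List (Finset α)} {D : List (Finset α × ℕ)},
      List.Forall₂ (fun a b => a ⊆ b) L (D.map Prod.fst) →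
      ∃ C₀, List.Forall₂ EsetSub C₀ D ∧ Matches C₀ L
  | _, [], h => ⟨[], List.Forall₂.nil, (List.forall₂_nil_right_iff.1 h).symm⟩
  | _, σ :: _, h => by
    obtain ⟨a, L, hσ, hL, rfl⟩ := List.forall₂_cons_right_iff.1 h
    obtain ⟨C₀, hC₀, hmatch⟩ := exists_forall₂_esetSub_matches hL
    exact ⟨(a, σ.2) :: C₀, .cons ⟨hσ, rfl⟩ hC₀, by simpa [Matches] using hmatch⟩

theorem Matches.exists_cSub_matches_of_lSub {C' : List (Finset α × ℕ)}
    {L L' : List (Finset α)} (hmatch : Matches C' L') (hL : LSub L L') :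
    ∃ C₀, CSub C₀ C' ∧ Matches C₀ L := by
  obtain ⟨M, hM, hLM⟩ := hL
  rw [← hmatch] at hM
  obtain ⟨D, hD, rfl⟩ := List.sublist_map_iff.1 hM
  obtain ⟨C₀, hC₀, hC₀L⟩ := exists_forall₂_esetSub_matches hLM
  exact ⟨C₀, ⟨D, hD, hC₀⟩, hC₀L⟩

theorem sSup_matches_le_ite_umaxk {p : α → ℝ} (hp : ∀ l, 0 ≤ p l) (C : List (Finset α × ℕ))
    {k : ℕ} {L L' : List (Finset α)} (hL : LSub L L') (hlen : L'.length ≤ k) :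
    sSup ({x : ℝ | ∃ C', CSub C' C ∧ Matches C' L' ∧ x = us p C'} ∪ {0}) ≤
      if ∃ C', CSub C' C ∧ Matches C' L then umaxk p C k else 0 := by
  have hite_nonneg : (0 : ℝ) ≤ if ∃ C', CSub C' C ∧ Matches C' L then umaxk p C k else 0 := by
    split_ifs
    exacts [umaxk_nonneg hp C k, le_rfl]
  refine Real.sSup_le ?_ hite_nonneg
  rintro x (⟨C', hC', hmatch, rfl⟩ | rfl)
  · obtain ⟨C₀, hC₀, hC₀L⟩ := hmatch.exists_cSub_matches_of_lSub hL
    rw [if_pos ⟨C₀, hC₀.trans hC', hC₀L⟩]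
    refine us_le_umaxk hp hC' ?_
    rwa [← List.length_map Prod.fst, hmatch]
  · exact hite_nonneg

/-- Pruning soundness, Property 1: if `LWU_k(L) < ξ`, then every
super-L-sequence `L'` of `L` with `|L'| ≤ k` has `u_max(L') < ξ`. -/
theorem pruning_sound (p : α → ℝ) (hp : ∀ l, 0 ≤ p l)
    (δ : Finset (List (Finset α × ℕ))) (k : ℕ) (ξ : ℝ)
    (L : List (Finset α)) (hunprom : LWU p δ k L < ξ) :
    ∀ L' : List (Finset α), LSub L L' → L'.length ≤ k → umax p δ L' < ξ := by
  intro L' hL hlen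
  calc umax p δ L' ≤ LWU p δ k L :=
        Finset.sum_le_sum fun C _ => sSup_matches_le_ite_umaxk hp C hL hlen
    _ < ξ := hunprom
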